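/- arXiv:2212.14123 — 5 statements merged into one kernel-verified Lean document; each statement's English description precedes it below -/
import Mathlib

section
/- Let n ∈ ℤ_{>0} and let 𝒳, 𝒴 be measure networks on n-point sets with uniform probability measures such that the network functions ω_X and ω_Y, viewed as n × n real matrices, are symmetric positive definite. Then GW_2(𝒳,𝒴) is realized by a measure-preserving map: there exists a bijection φ : X → Y such that dis_2(π_φ) = GW_2(𝒳,𝒴). In particular, GW_2(𝒳,𝒴) = GM_2(𝒳,𝒴). -/
open MeasureTheory ENNReal

/-- The uniform probability measure on a finite type. -/
noncomputable def unifFin (X : Type) [Fintype X] [MeasurableSpace X] : Measure X :=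
  (Fintype.card X : ℝ≥0∞)⁻¹ • Measure.count

/-- The 2-distortion of a coupling `π` between finite measure networks. -/
noncomputable def dis2Fin {X Y : Type} [MeasurableSpace X] [MeasurableSpace Y]
    (ωX : X → X → ℝ) (ωY : Y → Y → ℝ) (π : Measure (X × Y)) : ℝ≥0∞ :=
  (∫⁻ q : (X × Y) × (X × Y),
    ENNReal.ofReal |ωX q.1.1 q.2.1 - ωY q.1.2 q.2.2| ^ (2 : ℝ) ∂(π.prod π)) ^ ((1 : ℝ) / 2)

/-- The Gromov–Wasserstein 2-distance between finite measure networks. -/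
noncomputable def gw2Fin {X Y : Type} [MeasurableSpace X] [MeasurableSpace Y]
    (ωX : X → X → ℝ) (ωY : Y → Y → ℝ) (μX : Measure X) (μY : Measure Y) : ℝ≥0∞ :=
  ⨅ (π : Measure (X × Y)) (_ : IsProbabilityMeasure π)
    (_ : π.map Prod.fst = μX ∧ π.map Prod.snd = μY), dis2Fin ωX ωY π

/-- The Gromov–Monge 2-distance between finite measure networks. -/
noncomputable def gm2Fin {X Y : Type} [MeasurableSpace X] [MeasurableSpace Y]
    (ωX : X → X → ℝ) (ωY : Y → Y → ℝ) (μX : Measure X) (μY : Measure Y) : ℝ≥0∞ :=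
  ⨅ (φ : X → Y) (_ : Measurable φ) (_ : μX.map φ = μY),
    dis2Fin ωX ωY (μX.map fun x => (x, φ x))

/-!
For a coupling density `u` of two uniform measures on `n` points, expanding the square in the
distortion gives `dis₂(u)² = c - 2 ⟪u, (ω_X ⊗ ω_Y) u⟫`, where `c` depends only on `n`, `ω_X`,
`ω_Y`. The Kronecker product of positive semidefinite matrices is positive semidefinite, so
`dis₂²` is concave on the polytope of such couplings. By Birkhoff's theorem this polytope is the
convex hull of the couplings induced by bijections, and a concave function attains its minimum
over a convex hull at one of the generating points.
-/

open Finset Matrix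
open scoped Kronecker

theorem Matrix.PosSemidef.convexOn_dotProduct_mulVec {ι : Type*} [Fintype ι]
    {A : Matrix ι ι ℝ} (hA : A.PosSemidef) : ConvexOn ℝ Set.univ fun v => v ⬝ᵥ A *ᵥ v := by
  have hsymm : ∀ v w : ι → ℝ, w ⬝ᵥ A *ᵥ v = v ⬝ᵥ A *ᵥ w := fun v w => by
    rw [dotProduct_mulVec, dotProduct_comm, ← mulVec_transpose,
      ← conjTranspose_eq_transpose_of_trivial, hA.isHermitian.eq]
  refine ⟨convex_univ, fun v _ w _ a b ha hb hab => ?_⟩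
  have hnonneg := hA.dotProduct_mulVec_nonneg (v - w)
  obtain rfl : b = 1 - a := by linarith
  simp only [star_trivial, smul_eq_mul, mulVec_add, mulVec_smul, mulVec_sub, dotProduct_add,
    add_dotProduct, dotProduct_smul, smul_dotProduct, dotProduct_sub, sub_dotProduct,
    hsymm v w] at hnonneg ⊢
  -- `a q(v) + (1 - a) q(w) - q(a v + (1 - a) w) = a (1 - a) q(v - w)`
  nlinarith [mul_nonneg ha hb]

namespace MeasureNetwork

section Algebra

variable {X Y : Type*} [Fintype X] [Fintype Y]

noncomputable def distortionSq (ωX : X → X → ℝ) (ωY : Y → Y → ℝ) (u : X × Y → ℝ) : ℝ :=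
  ∑ p, ∑ q, (ωX p.1 q.1 - ωY p.2 q.2) ^ 2 * (u p * u q)

def constMarginals (r : ℝ) : Set (X × Y → ℝ) :=
  {u | (∀ x, ∑ y, u (x, y) = r) ∧ ∀ y, ∑ x, u (x, y) = r}

def graphDensity [DecidableEq Y] (r : ℝ) (f : X → Y) : X × Y → ℝ :=
  fun p => if f p.1 = p.2 then r else 0

lemma sum_sum_mul_fst_of_mem_constMarginals {r : ℝ} {u : X × Y → ℝ} (hu : u ∈ constMarginals r)
    (g : X → X → ℝ) :
    ∑ p : X × Y, ∑ q : X × Y, g p.1 q.1 * (u p * u q) = (∑ x, ∑ x', g x x') * r ^ 2 := by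
  calc ∑ p : X × Y, ∑ q : X × Y, g p.1 q.1 * (u p * u q)
      = ∑ x, ∑ x', g x x' * ((∑ y, u (x, y)) * ∑ y', u (x', y')) := by
        simp only [Fintype.sum_prod_type]
        refine sum_congr rfl fun x _ => sum_comm.trans (sum_congr rfl fun x' _ => ?_)
        rw [Fintype.sum_mul_sum]; simp only [mul_sum]
    _ = (∑ x, ∑ x', g x x') * r ^ 2 := by simp only [hu.1, sum_mul, sq]

lemma sum_sum_mul_snd_of_mem_constMarginals {r : ℝ} {u : X × Y → ℝ} (hu : u ∈ constMarginals r)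
    (g : Y → Y → ℝ) :
    ∑ p : X × Y, ∑ q : X × Y, g p.2 q.2 * (u p * u q) = (∑ y, ∑ y', g y y') * r ^ 2 := by
  calc ∑ p : X × Y, ∑ q : X × Y, g p.2 q.2 * (u p * u q)
      = ∑ y, ∑ y', g y y' * ((∑ x, u (x, y)) * ∑ x', u (x', y')) := by
        simp only [Fintype.sum_prod_type_right]
        refine sum_congr rfl fun y _ => sum_comm.trans (sum_congr rfl fun y' _ => ?_)
        rw [Fintype.sum_mul_sum]; simp only [mul_sum]
    _ = (∑ y, ∑ y', g y y') * r ^ 2 := by simp only [hu.2, sum_mul, sq]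

lemma distortionSq_eq_of_mem_constMarginals (ωX : X → X → ℝ) (ωY : Y → Y → ℝ) {r : ℝ}
    {u : X × Y → ℝ} (hu : u ∈ constMarginals r) :
    distortionSq ωX ωY u = ((∑ x, ∑ x', ωX x x' ^ 2) + ∑ y, ∑ y', ωY y y' ^ 2) * r ^ 2
      - 2 * (u ⬝ᵥ (Matrix.of ωX ⊗ₖ Matrix.of ωY) *ᵥ u) := by
  have hexpand : distortionSq ωX ωY u = ∑ p, ∑ q, ωX p.1 q.1 ^ 2 * (u p * u q)
      + ∑ p, ∑ q, ωY p.2 q.2 ^ 2 * (u p * u q)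
      - 2 * ∑ p, ∑ q, (ωX p.1 q.1 * ωY p.2 q.2) * (u p * u q) := by
    simp only [distortionSq, mul_sum, ← sum_add_distrib, ← sum_sub_distrib]
    exact sum_congr rfl fun p _ => sum_congr rfl fun q _ => by ring
  have hform : u ⬝ᵥ (Matrix.of ωX ⊗ₖ Matrix.of ωY) *ᵥ u
      = ∑ p, ∑ q, (ωX p.1 q.1 * ωY p.2 q.2) * (u p * u q) := by
    simp only [dotProduct, mulVec, kroneckerMap_apply, of_apply, mul_sum]
    exact sum_congr rfl fun p _ => sum_congr rfl fun q _ => by ring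
  rw [hexpand, hform, sum_sum_mul_fst_of_mem_constMarginals hu fun x x' => ωX x x' ^ 2,
    sum_sum_mul_snd_of_mem_constMarginals hu fun y y' => ωY y y' ^ 2]
  ring

lemma convex_constMarginals (r : ℝ) : Convex ℝ (constMarginals r : Set (X × Y → ℝ)) := by
  intro u hu v hv a b _ _ hab
  constructor
  · intro x
    simp only [Pi.add_apply, Pi.smul_apply, smul_eq_mul, sum_add_distrib, ← mul_sum, hu.1, hv.1]
    rw [← add_mul, hab, one_mul]
  · intro y
    simp only [Pi.add_apply, Pi.smul_apply, smul_eq_mul, sum_add_distrib, ← mul_sum, hu.2, hv.2]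
    rw [← add_mul, hab, one_mul]

lemma concaveOn_distortionSq {ωX : X → X → ℝ} {ωY : Y → Y → ℝ} (hX : (Matrix.of ωX).PosSemidef)
    (hY : (Matrix.of ωY).PosSemidef) (r : ℝ) :
    ConcaveOn ℝ (constMarginals r) (distortionSq ωX ωY) := by
  have hconv := ((hX.kronecker hY).convexOn_dotProduct_mulVec.subset (Set.subset_univ _)
    (convex_constMarginals r)).smul zero_le_two
  let c := ((∑ x, ∑ x', ωX x x' ^ 2) + ∑ y, ∑ y', ωY y y' ^ 2) * r ^ 2
  refine ((concaveOn_const c (convex_constMarginals r)).sub hconv).congr fun u hu => ?_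
  simp [c, distortionSq_eq_of_mem_constMarginals ωX ωY hu]

lemma graphDensity_mem_constMarginals [DecidableEq Y] (r : ℝ) (φ : X ≃ Y) :
    graphDensity r φ ∈ constMarginals r := by
  refine ⟨fun x => by simp [graphDensity], fun y => ?_⟩
  simpa [graphDensity] using Equiv.sum_comp φ fun y' => if y' = y then r else 0

lemma card_eq_of_mem_constMarginals {r : ℝ} (hr : r ≠ 0) {u : X × Y → ℝ}
    (hu : u ∈ constMarginals r) : Fintype.card X = Fintype.card Y := by
  have h : (Fintype.card X : ℝ) * r = Fintype.card Y * r := by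
    calc (Fintype.card X : ℝ) * r = ∑ x, ∑ y, u (x, y) := by simp [hu.1]
      _ = ∑ y, ∑ x, u (x, y) := sum_comm
      _ = Fintype.card Y * r := by simp [hu.2]
  exact_mod_cast mul_right_cancel₀ hr h

lemma mem_convexHull_range_graphDensity [DecidableEq Y] {r : ℝ} (hr : 0 < r) {u : X × Y → ℝ}
    (hu₀ : 0 ≤ u) (hu : u ∈ constMarginals r) :
    u ∈ convexHull ℝ (Set.range fun φ : X ≃ Y => graphDensity r φ) := by
  classical
  let e : X ≃ Y := Fintype.equivOfCardEq (card_eq_of_mem_constMarginals hr.ne' hu)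
  let L : Matrix X X ℝ →ₗ[ℝ] X × Y → ℝ :=
    { toFun := fun M p => r * M p.1 (e.symm p.2)
      map_add' := fun M N => by ext; simp [mul_add]
      map_smul' := fun c M => by ext; simp [mul_left_comm] }
  let M : Matrix X X ℝ := Matrix.of fun x x' => r⁻¹ * u (x, e x')
  have hM : M ∈ doublyStochastic ℝ X := by
    refine mem_doublyStochastic_iff_sum.mpr
      ⟨fun x x' => mul_nonneg (inv_nonneg.2 hr.le) (hu₀ _), fun x => ?_, fun x' => ?_⟩
    · simp only [M, of_apply, ← mul_sum, Equiv.sum_comp e fun y => u (x, y), hu.1,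
        inv_mul_cancel₀ hr.ne']
    · simp only [M, of_apply, ← mul_sum, hu.2, inv_mul_cancel₀ hr.ne']
  have hLM : L M = u := by ext p; simp [L, M, hr.ne']
  have hLperm : ∀ σ : Equiv.Perm X, L (σ.permMatrix ℝ) = graphDensity r (σ.trans e) := by
    intro σ; ext p
    by_cases h : e (σ p.1) = p.2 <;>
      simp [L, graphDensity, Equiv.Perm.permMatrix, Equiv.eq_symm_apply, h]
  have hrange : L '' {σ.permMatrix ℝ | σ : Equiv.Perm X} ⊆
      Set.range fun φ : X ≃ Y => graphDensity r φ := by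
    rintro _ ⟨_, ⟨σ, rfl⟩, rfl⟩
    exact ⟨σ.trans e, (hLperm σ).symm⟩
  rw [← hLM]
  refine convexHull_mono hrange ?_
  rw [← L.image_convexHull, ← doublyStochastic_eq_convexHull_permMatrix]
  exact Set.mem_image_of_mem L hM

lemma exists_graphDensity_le [DecidableEq Y] {ωX : X → X → ℝ} {ωY : Y → Y → ℝ}
    (hX : (Matrix.of ωX).PosSemidef) (hY : (Matrix.of ωY).PosSemidef) {r : ℝ} (hr : 0 < r)
    {u : X × Y → ℝ} (hu₀ : 0 ≤ u) (hu : u ∈ constMarginals r) :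
    ∃ φ : X ≃ Y, distortionSq ωX ωY (graphDensity r φ) ≤ distortionSq ωX ωY u := by
  obtain ⟨_, ⟨φ, rfl⟩, hφ⟩ := (concaveOn_distortionSq hX hY r).exists_le_of_mem_convexHull
    (Set.range_subset_iff.2 (graphDensity_mem_constMarginals r))
    (mem_convexHull_range_graphDensity hr hu₀ hu)
  exact ⟨φ, hφ⟩

end Algebra

section Measure

variable {X Y : Type} [MeasurableSpace X] [MeasurableSingletonClass X]
  [MeasurableSpace Y] [MeasurableSingletonClass Y]

lemma dis2Fin_eq_distortionSq [Fintype X] [Fintype Y] (ωX : X → X → ℝ) (ωY : Y → Y → ℝ)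
    (π : Measure (X × Y)) [IsFiniteMeasure π] :
    dis2Fin ωX ωY π =
      ENNReal.ofReal (distortionSq ωX ωY fun p => (π {p}).toReal) ^ (1 / 2 : ℝ) := by
  have hterm : ∀ p q : X × Y,
      0 ≤ (ωX p.1 q.1 - ωY p.2 q.2) ^ 2 * ((π {p}).toReal * (π {q}).toReal) :=
    fun p q => by positivity
  rw [dis2Fin, lintegral_fintype, Fintype.sum_prod_type, distortionSq,
    ENNReal.ofReal_sum_of_nonneg fun p _ => sum_nonneg fun q _ => hterm p q]
  congr 1
  refine sum_congr rfl fun p _ => ?_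
  rw [ENNReal.ofReal_sum_of_nonneg fun q _ => hterm p q]
  refine sum_congr rfl fun q _ => ?_
  rw [← Set.singleton_prod_singleton, Measure.prod_prod, ENNReal.ofReal_mul (sq_nonneg _),
    ENNReal.ofReal_mul ENNReal.toReal_nonneg, ENNReal.ofReal_toReal (measure_ne_top π _),
    ENNReal.ofReal_toReal (measure_ne_top π _),
    ENNReal.ofReal_rpow_of_nonneg (abs_nonneg _) zero_le_two, Real.rpow_two, sq_abs]

lemma sum_measure_singleton_fst [Fintype Y] (π : Measure (X × Y)) [IsFiniteMeasure π] (x : X) :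
    ∑ y, (π {(x, y)}).toReal = ((π.map Prod.fst) {x}).toReal := by
  rw [Measure.map_apply measurable_fst (measurableSet_singleton x),
    ← ENNReal.toReal_sum fun y _ => measure_ne_top π _]
  congr 1
  have : (Prod.fst ⁻¹' {x} : Set (X × Y)) = ↑(({x} : Finset X) ×ˢ (univ : Finset Y)) := by
    ext ⟨a, b⟩; simp [eq_comm]
  rw [this, ← sum_measure_singleton, sum_product, sum_singleton]

lemma sum_measure_singleton_snd [Fintype X] (π : Measure (X × Y)) [IsFiniteMeasure π] (y : Y) :
    ∑ x, (π {(x, y)}).toReal = ((π.map Prod.snd) {y}).toReal := by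
  rw [Measure.map_apply measurable_snd (measurableSet_singleton y),
    ← ENNReal.toReal_sum fun x _ => measure_ne_top π _]
  congr 1
  have : (Prod.snd ⁻¹' {y} : Set (X × Y)) = ↑((univ : Finset X) ×ˢ ({y} : Finset Y)) := by
    ext ⟨a, b⟩; simp [eq_comm]
  rw [this, ← sum_measure_singleton, sum_product_right, sum_singleton]

lemma unifFin_singleton [Fintype X] (x : X) : unifFin X {x} = (Fintype.card X : ℝ≥0∞)⁻¹ := by
  simp [unifFin]

instance isProbabilityMeasure_unifFin [Fintype X] [Nonempty X] :
    IsProbabilityMeasure (unifFin X) := by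
  constructor
  simp [unifFin, ENNReal.inv_mul_cancel]

lemma map_unifFin_equiv [Fintype X] [Fintype Y] (φ : X ≃ Y) : (unifFin X).map φ = unifFin Y := by
  refine Measure.ext_of_singleton fun y => ?_
  rw [Measure.map_apply (measurable_of_countable _) (measurableSet_singleton y),
    ← φ.image_symm_eq_preimage, Set.image_singleton, unifFin_singleton, unifFin_singleton,
    Fintype.card_congr φ]

lemma density_mem_constMarginals [Fintype X] [Fintype Y] (π : Measure (X × Y)) [IsFiniteMeasure π]
    (hπ : π.map Prod.fst = unifFin X ∧ π.map Prod.snd = unifFin Y)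
    (hcard : Fintype.card X = Fintype.card Y) :
    (fun p => (π {p}).toReal) ∈ constMarginals (Fintype.card X : ℝ)⁻¹ := by
  refine ⟨fun x => ?_, fun y => ?_⟩
  · simp [sum_measure_singleton_fst, hπ.1, unifFin_singleton]
  · simp [sum_measure_singleton_snd, hπ.2, unifFin_singleton, hcard]

lemma map_prodMk_singleton [Countable X] [DecidableEq Y] (μ : Measure X) (f : X → Y) (p : X × Y) :
    (μ.map fun x => (x, f x)) {p} = if f p.1 = p.2 then μ {p.1} else 0 := by
  rw [Measure.map_apply (measurable_of_countable _) (measurableSet_singleton p)]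
  split_ifs with h
  · congr 1
    ext x
    simp only [Set.mem_preimage, Set.mem_singleton_iff, Prod.ext_iff]
    exact ⟨And.left, fun hx => ⟨hx, hx ▸ h⟩⟩
  · convert measure_empty (μ := μ)
    ext x
    simp only [Set.mem_preimage, Set.mem_singleton_iff, Prod.ext_iff, Set.mem_empty_iff_false,
      iff_false, not_and]
    exact fun hx hf => h (hx ▸ hf)

lemma dis2Fin_map_unifFin_prodMk [Fintype X] [Nonempty X] [Fintype Y] [DecidableEq Y]
    (ωX : X → X → ℝ) (ωY : Y → Y → ℝ) (f : X → Y) :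
    dis2Fin ωX ωY ((unifFin X).map fun x => (x, f x)) =
      ENNReal.ofReal (distortionSq ωX ωY (graphDensity (Fintype.card X : ℝ)⁻¹ f)) ^
        (1 / 2 : ℝ) := by
  have := Measure.isProbabilityMeasure_map (μ := unifFin X)
    (measurable_of_countable fun x => (x, f x)).aemeasurable
  rw [dis2Fin_eq_distortionSq]
  congr 3
  ext p
  rw [map_prodMk_singleton, graphDensity]
  split_ifs <;> simp [unifFin_singleton]

end Measure

section Coupling

variable {X Y : Type} [MeasurableSpace X] [MeasurableSpace Y]

lemma map_prodMk_marginals {μX : Measure X} {μY : Measure Y} {f : X → Y} (hf : Measurable f)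
    (hmap : μX.map f = μY) :
    (μX.map fun x => (x, f x)).map Prod.fst = μX ∧
      (μX.map fun x => (x, f x)).map Prod.snd = μY := by
  have hgraph : Measurable fun x => (x, f x) := measurable_id'.prodMk hf
  rw [Measure.map_map measurable_fst hgraph, Measure.map_map measurable_snd hgraph]
  exact ⟨Measure.map_id, hmap⟩

lemma gw2Fin_le_dis2Fin (ωX : X → X → ℝ) (ωY : Y → Y → ℝ) {μX : Measure X} {μY : Measure Y}
    (π : Measure (X × Y)) [hπ : IsProbabilityMeasure π]
    (hmarg : π.map Prod.fst = μX ∧ π.map Prod.snd = μY) :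
    gw2Fin ωX ωY μX μY ≤ dis2Fin ωX ωY π :=
  iInf_le_of_le π <| iInf_le_of_le hπ <| iInf_le _ hmarg

lemma gw2Fin_le_gm2Fin (ωX : X → X → ℝ) (ωY : Y → Y → ℝ) (μX : Measure X) [IsProbabilityMeasure μX]
    (μY : Measure Y) : gw2Fin ωX ωY μX μY ≤ gm2Fin ωX ωY μX μY := by
  refine le_iInf₂ fun f hf => le_iInf fun hmap => ?_
  have := Measure.isProbabilityMeasure_map (μ := μX) (measurable_id'.prodMk hf).aemeasurable
  exact gw2Fin_le_dis2Fin ωX ωY _ (map_prodMk_marginals hf hmap)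

end Coupling

end MeasureNetwork

open MeasureNetwork in
/-- Proposition `prop:positive_definite`: for measure networks on `n`-point
sets with uniform measures and symmetric positive definite network function matrices, the
Gromov–Wasserstein 2-distance is realized by a measure-preserving bijection; in particular
`GW₂ = GM₂`. -/
theorem gw2_realized_by_monge_map_of_posDef
    {n : ℕ} (hn : 0 < n)
    {X Y : Type} [Fintype X] [MeasurableSpace X] [MeasurableSingletonClass X]
    [Fintype Y] [MeasurableSpace Y] [MeasurableSingletonClass Y]
    (hX : Fintype.card X = n) (hY : Fintype.card Y = n)
    (ωX : X → X → ℝ) (ωY : Y → Y → ℝ)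
    (hposX : (Matrix.of ωX).PosDef) (hposY : (Matrix.of ωY).PosDef) :
    ∃ φ : X ≃ Y, Measurable φ ∧ (unifFin X).map φ = unifFin Y ∧
      dis2Fin ωX ωY ((unifFin X).map fun x => (x, φ x)) =
        gw2Fin ωX ωY (unifFin X) (unifFin Y) ∧
      gw2Fin ωX ωY (unifFin X) (unifFin Y) = gm2Fin ωX ωY (unifFin X) (unifFin Y) := by
  classical
  have hcard : Fintype.card X = Fintype.card Y := hX.trans hY.symm
  have : Nonempty X := Fintype.card_pos_iff.mp (hX ▸ hn)
  have : Nonempty (X ≃ Y) := ⟨Fintype.equivOfCardEq hcard⟩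
  have hr : 0 < (Fintype.card X : ℝ)⁻¹ := by positivity
  obtain ⟨φ, hφ⟩ := Finite.exists_min fun φ : X ≃ Y =>
    distortionSq ωX ωY (graphDensity (Fintype.card X : ℝ)⁻¹ φ)
  have hmap : (unifFin X).map φ = unifFin Y := map_unifFin_equiv φ
  have := Measure.isProbabilityMeasure_map (μ := unifFin X)
    (measurable_of_countable fun x => (x, φ x)).aemeasurable
  have hopt : dis2Fin ωX ωY ((unifFin X).map fun x => (x, φ x)) ≤
      gw2Fin ωX ωY (unifFin X) (unifFin Y) := by
    refine le_iInf₂ fun π _ => le_iInf fun hπ => ?_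
    obtain ⟨ψ, hψ⟩ := exists_graphDensity_le hposX.posSemidef hposY.posSemidef hr
      (fun p => ENNReal.toReal_nonneg) (density_mem_constMarginals π hπ hcard)
    rw [dis2Fin_map_unifFin_prodMk, dis2Fin_eq_distortionSq]
    gcongr
    exact (hφ ψ).trans hψ
  have hgw := le_antisymm hopt
    (gw2Fin_le_dis2Fin ωX ωY _ (map_prodMk_marginals (measurable_of_countable _) hmap))
  refine ⟨φ, measurable_of_countable _, hmap, hgw, le_antisymm (gw2Fin_le_gm2Fin ..) ?_⟩
  rw [← hgw]
  exact iInf₂_le_of_le φ (measurable_of_countable _) (iInf_le _ hmap)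
end

section
/- Let A, B ∈ ℝ^{n×n} be symmetric positive definite matrices and let K = {π ∈ ℝ^{n×n} : π_{ij} ≥ 0 for all i,j, and every row sum and every column sum of π equals 1/n}. Then the maximum of the function π ↦ ⟨Aπ, πB⟩ (Frobenius inner product) over K is attained at a matrix of the form (1/n)P, where P is a permutation matrix. -/
/-!
The objective `π ↦ ⟨Aπ, πB⟩` is the diagonal of a bilinear form whose values on the diagonal are
traces of products of positive semidefinite matrices, hence nonnegative; so the objective is
convex. By Birkhoff's theorem the polytope is the convex hull of the scaled permutation matrices,
and a convex function on a convex hull is bounded by its values at the generating points, of which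
there are finitely many.
-/

open Matrix

/-- The Frobenius inner product of two real square matrices. -/
def frobInner {n : ℕ} (M N : Matrix (Fin n) (Fin n) ℝ) : ℝ :=
  ∑ i, ∑ j, M i j * N i j

/-- The polytope of `n × n` matrices with nonnegative entries all of whose row sums and
column sums equal `1/n` (i.e. `(1/n)` times the bistochastic matrices). -/
def couplingPolytope (n : ℕ) : Set (Matrix (Fin n) (Fin n) ℝ) :=
  {π | (∀ i j, 0 ≤ π i j) ∧ (∀ i, ∑ j, π i j = (n : ℝ)⁻¹) ∧ (∀ j, ∑ i, π i j = (n : ℝ)⁻¹)}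

open scoped Pointwise

theorem LinearMap.BilinForm.convexOn_univ_apply_self {𝕜 E : Type*} [Field 𝕜] [LinearOrder 𝕜]
    [IsStrictOrderedRing 𝕜] [AddCommGroup E] [Module 𝕜 E] (Φ : LinearMap.BilinForm 𝕜 E)
    (hΦ : ∀ x, 0 ≤ Φ x x) : ConvexOn 𝕜 Set.univ fun x ↦ Φ x x := by
  refine ⟨convex_univ, fun x _ y _ a b ha hb hab ↦ ?_⟩
  -- as `a + b = 1`, `Φ (a•x + b•y) (a•x + b•y) = a Φ x x + b Φ y y - a b Φ (x - y) (x - y)`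
  have h := mul_nonneg (mul_nonneg ha hb) (hΦ (x - y))
  simp only [map_add, map_smul, map_sub, LinearMap.add_apply, LinearMap.smul_apply,
    LinearMap.sub_apply, smul_eq_mul] at h ⊢
  obtain rfl : b = 1 - a := by linear_combination hab
  nlinarith

open scoped MatrixOrder ComplexOrder in
theorem Matrix.PosSemidef.trace_mul_nonneg {𝕜 n : Type*} [RCLike 𝕜] [Fintype n]
    {P Q : Matrix n n 𝕜} (hP : P.PosSemidef) (hQ : Q.PosSemidef) : 0 ≤ (P * Q).trace := by
  classical
  obtain ⟨R, rfl⟩ := CStarAlgebra.nonneg_iff_eq_star_mul_self.mp hQ.nonneg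
  rw [star_eq_conjTranspose, ← Matrix.mul_assoc, trace_mul_comm, ← Matrix.mul_assoc]
  exact (hP.mul_mul_conjTranspose_same R).trace_nonneg

section

variable {n : ℕ}

theorem frobInner_eq_trace (M N : Matrix (Fin n) (Fin n) ℝ) : frobInner M N = (Mᵀ * N).trace := by
  simp only [frobInner, trace, diag, mul_apply, transpose_apply]
  exact Finset.sum_comm

def frobInnerMulMul (A B : Matrix (Fin n) (Fin n) ℝ) :
    LinearMap.BilinForm ℝ (Matrix (Fin n) (Fin n) ℝ) :=
  LinearMap.mk₂ ℝ (fun x y ↦ frobInner (A * x) (y * B))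
    (fun _ _ _ ↦ by
      simp only [frobInner_eq_trace, Matrix.mul_add, transpose_add, Matrix.add_mul, trace_add])
    (fun _ _ _ ↦ by
      simp only [frobInner_eq_trace, Matrix.mul_smul, transpose_smul, Matrix.smul_mul, trace_smul])
    (fun _ _ _ ↦ by simp only [frobInner_eq_trace, Matrix.add_mul, Matrix.mul_add, trace_add])
    (fun _ _ _ ↦ by simp only [frobInner_eq_trace, Matrix.smul_mul, Matrix.mul_smul, trace_smul])

theorem frobInner_mul_mul_self_nonneg {A B : Matrix (Fin n) (Fin n) ℝ} (hA : A.PosSemidef)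
    (hB : B.PosSemidef) (x : Matrix (Fin n) (Fin n) ℝ) : 0 ≤ frobInner (A * x) (x * B) := by
  have hAt : Aᵀ = A := by simpa using hA.isHermitian.eq
  rw [frobInner_eq_trace, transpose_mul, hAt, ← Matrix.mul_assoc]
  simpa using (hA.conjTranspose_mul_mul_same x).trace_mul_nonneg hB

theorem convexOn_frobInner_mul_mul {A B : Matrix (Fin n) (Fin n) ℝ} (hA : A.PosSemidef)
    (hB : B.PosSemidef) : ConvexOn ℝ Set.univ fun x ↦ frobInner (A * x) (x * B) :=
  (frobInnerMulMul A B).convexOn_univ_apply_self (frobInner_mul_mul_self_nonneg hA hB)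

theorem couplingPolytope_eq_smul_doublyStochastic (hn : 0 < n) :
    couplingPolytope n =
      (n : ℝ)⁻¹ • (doublyStochastic ℝ (Fin n) : Set (Matrix (Fin n) (Fin n) ℝ)) := by
  have hn' : (n : ℝ) ≠ 0 := Nat.cast_ne_zero.mpr hn.ne'
  ext π
  rw [Set.mem_inv_smul_set_iff₀ hn', SetLike.mem_coe, mem_doublyStochastic_iff_sum]
  simp only [couplingPolytope, Set.mem_ofPred_eq, Matrix.smul_apply, smul_eq_mul,
    ← Finset.mul_sum, mul_nonneg_iff_of_pos_left (Nat.cast_pos.mpr hn), mul_eq_one_iff_inv_eq₀ hn', eq_comm]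

theorem couplingPolytope_eq_convexHull (hn : 0 < n) :
    couplingPolytope n =
      convexHull ℝ (Set.range fun σ : Equiv.Perm (Fin n) ↦ (n : ℝ)⁻¹ • σ.permMatrix ℝ) := by
  rw [couplingPolytope_eq_smul_doublyStochastic hn, doublyStochastic_eq_convexHull_permMatrix,
    ← convexHull_smul]
  congr 1
  ext M
  simp [Set.mem_smul_set]

end

/-- for symmetric positive definite `A, B ∈ ℝ^{n×n}`, the maximum of
`π ↦ ⟨Aπ, πB⟩` (Frobenius inner product) over the polytope `K` of matrices with
nonnegative entries and all row and column sums equal to `1/n` is attained at a scaled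
permutation matrix `(1/n)P`. -/
theorem frobenius_quadratic_max_at_permutation
    {n : ℕ} (hn : 0 < n) (A B : Matrix (Fin n) (Fin n) ℝ)
    (hA : A.PosDef) (hB : B.PosDef) :
    ∃ σ : Equiv.Perm (Fin n),
      ((n : ℝ)⁻¹ • (σ.permMatrix ℝ)) ∈ couplingPolytope n ∧
      ∀ π ∈ couplingPolytope n,
        frobInner (A * π) (π * B) ≤
          frobInner (A * ((n : ℝ)⁻¹ • (σ.permMatrix ℝ))) (((n : ℝ)⁻¹ • (σ.permMatrix ℝ)) * B) := by
  obtain ⟨σ, -, hσ⟩ := Finset.univ.exists_max_image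
    (fun σ : Equiv.Perm (Fin n) ↦
      frobInner (A * ((n : ℝ)⁻¹ • σ.permMatrix ℝ)) (((n : ℝ)⁻¹ • σ.permMatrix ℝ) * B))
    Finset.univ_nonempty
  rw [couplingPolytope_eq_convexHull hn]
  refine ⟨σ, subset_convexHull ℝ _ ⟨σ, rfl⟩, fun π hπ ↦ ?_⟩
  obtain ⟨_, ⟨τ, rfl⟩, hτ⟩ := (convexOn_frobInner_mul_mul hA.posSemidef hB.posSemidef)
    |>.exists_ge_of_mem_convexHull (Set.subset_univ _) hπ
  exact hτ.trans (hσ τ (Finset.mem_univ τ))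
end

section
/- Let 𝒳 and 𝒴 be metric measure spaces and p ∈ [1,∞). Then GW_p(𝒳,𝒴) = inf_𝒵 GM_p(𝒵,𝒴), where the infimum is taken over all mass splittings 𝒵 of 𝒳. -/
open MeasureTheory ENNReal

/-- The `p`-distortion (`p ∈ [1,∞)`) of a coupling between measure networks. -/
noncomputable def disP {X Y : Type} [MeasurableSpace X] [MeasurableSpace Y]
    (ωX : X → X → ℝ) (ωY : Y → Y → ℝ) (p : ℝ) (π : Measure (X × Y)) : ℝ≥0∞ :=
  (∫⁻ q : (X × Y) × (X × Y),
      ENNReal.ofReal |ωX q.1.1 q.2.1 - ωY q.1.2 q.2.2| ^ p ∂(π.prod π)) ^ (1 / p)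

/-- The Gromov–Wasserstein `p`-distance (`p ∈ [1,∞)`) between measure networks. -/
noncomputable def gwP {X Y : Type} [MeasurableSpace X] [MeasurableSpace Y]
    (ωX : X → X → ℝ) (ωY : Y → Y → ℝ) (μX : Measure X) (μY : Measure Y) (p : ℝ) : ℝ≥0∞ :=
  ⨅ (π : Measure (X × Y)) (_ : IsProbabilityMeasure π)
    (_ : π.map Prod.fst = μX ∧ π.map Prod.snd = μY), disP ωX ωY p π

/-- The Gromov–Monge `p`-distance (`p ∈ [1,∞)`) between measure networks (`⊤` if there is
no measure-preserving map). -/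
noncomputable def gmP {X Y : Type} [MeasurableSpace X] [MeasurableSpace Y]
    (ωX : X → X → ℝ) (ωY : Y → Y → ℝ) (μX : Measure X) (μY : Measure Y) (p : ℝ) : ℝ≥0∞ :=
  ⨅ (φ : X → Y) (_ : Measurable φ) (_ : μX.map φ = μY),
    disP ωX ωY p (μX.map fun x => (x, φ x))

/-- A mass splitting of a metric measure space `(X, dist, μX)`: a measure network `𝒵`
(on a Polish space, with fully supported Borel probability measure) together with a
measure-preserving map `ρ : Z → X`, whose network function is the pullback `ρ* d_X`. -/
structure MassSplitting (X : Type) [MetricSpace X] [MeasurableSpace X] (μX : Measure X) where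
  Z : Type
  mZ : MeasurableSpace Z
  tZ : TopologicalSpace Z
  polish : @PolishSpace Z tZ
  borel : @BorelSpace Z tZ mZ
  μZ : @Measure Z mZ
  prob : @IsProbabilityMeasure Z mZ μZ
  fullSupp : @MeasureTheory.Measure.IsOpenPosMeasure Z tZ mZ μZ
  ρ : Z → X
  meas_ρ : @Measurable Z X mZ _ ρ
  push : @Measure.map Z X mZ _ ρ μZ = μX

/-- The network function of a mass splitting: the pullback of the metric of `X`. -/
noncomputable def MassSplitting.ω {X : Type} [MetricSpace X] [MeasurableSpace X]
    {μX : Measure X} (S : MassSplitting X μX) : S.Z → S.Z → ℝ :=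
  fun z z' => dist (S.ρ z) (S.ρ z')


/-!
A measure-preserving map `φ` on a mass splitting `ρ : Z → X` yields the coupling
`(ρ, φ)_# μ_Z` of `μ_X` and `μ_Y`, whose distortion is the distortion of `φ`, since the network
function of `Z` is pulled back along `ρ`. Conversely, a coupling `π` is itself a mass splitting
of `X`: restricted to its support (which makes it fully supported) and with the first projection
as `ρ`, the second projection is a measure-preserving map with the distortion of `π`.
-/

open Set

namespace MeasureTheory.Measure

variable {A : Type} [TopologicalSpace A] [MeasurableSpace A] [OpensMeasurableSpace A]
  [HereditarilyLindelofSpace A] (μ : Measure A)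

lemma map_comap_subtype_coe_support : (μ.comap ((↑) : μ.support → A)).map (↑) = μ := by
  rw [map_comap_subtype_coe isClosed_support.measurableSet, restrict_eq_self_of_ae_mem]
  exact support_mem_ae

lemma map_comap_subtype_coe_support_comp {B : Type} [MeasurableSpace B] {g : A → B}
    (hg : Measurable g) :
    (μ.comap ((↑) : μ.support → A)).map (fun a : μ.support => g a) = μ.map g := by
  conv_rhs => rw [← map_comap_subtype_coe_support μ]
  rw [map_map hg measurable_subtype_coe]
  rfl

instance isOpenPosMeasure_comap_subtype_coe_support :
    (μ.comap ((↑) : μ.support → A)).IsOpenPosMeasure := by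
  refine ⟨fun V hV ⟨⟨a, ha⟩, haV⟩ => ?_⟩
  obtain ⟨U, hU, rfl⟩ := isOpen_induced_iff.1 hV
  rw [comap_subtype_coe_apply isClosed_support.measurableSet, image_preimage_eq_inter_range,
    Subtype.range_coe, measure_inter_conull measure_compl_support]
  exact ((mem_support_iff_forall a).1 ha U (hU.mem_nhds haV)).ne'

instance isProbabilityMeasure_comap_subtype_coe_support [IsProbabilityMeasure μ] :
    IsProbabilityMeasure (μ.comap ((↑) : μ.support → A)) := by
  refine ⟨?_⟩
  rw [← preimage_univ (f := ((↑) : μ.support → A)),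
    ← map_apply measurable_subtype_coe MeasurableSet.univ, map_comap_subtype_coe_support,
    measure_univ]

end MeasureTheory.Measure

section Distortion

variable {X Y Z : Type} [MeasurableSpace X] [MeasurableSpace Y] [MeasurableSpace Z]
  {ωX : X → X → ℝ} {ωY : Y → Y → ℝ}

lemma disP_map (hωX : Measurable fun q : X × X => ωX q.1 q.2)
    (hωY : Measurable fun q : Y × Y => ωY q.1 q.2) (p : ℝ) (ν : Measure Z) [SFinite ν]
    {f : Z → X × Y} (hf : Measurable f) :
    disP ωX ωY p (ν.map f) =
      (∫⁻ w : Z × Z, ENNReal.ofReal |ωX (f w.1).1 (f w.2).1 - ωY (f w.1).2 (f w.2).2| ^ p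
        ∂(ν.prod ν)) ^ (1 / p) := by
  have hωX' : Measurable fun q : (X × Y) × (X × Y) => ωX q.1.1 q.2.1 :=
    hωX.comp (measurable_fst.fst.prodMk measurable_snd.fst)
  have hωY' : Measurable fun q : (X × Y) × (X × Y) => ωY q.1.2 q.2.2 :=
    hωY.comp (measurable_fst.snd.prodMk measurable_snd.snd)
  have hintegrand : Measurable fun q : (X × Y) × (X × Y) =>
      ENNReal.ofReal |ωX q.1.1 q.2.1 - ωY q.1.2 q.2.2| ^ p :=
    ((hωX'.sub hωY').abs.ennreal_ofReal).pow_const p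
  rw [disP, Measure.map_prod_map _ _ hf hf, lintegral_map hintegrand (hf.prodMap hf)]
  rfl

lemma disP_pullback_map_graph (hωX : Measurable fun q : X × X => ωX q.1 q.2)
    (hωY : Measurable fun q : Y × Y => ωY q.1 q.2) (p : ℝ) (ν : Measure Z) [SFinite ν]
    {ρ : Z → X} {φ : Z → Y} (hρ : Measurable ρ) (hφ : Measurable φ) :
    disP (fun z z' => ωX (ρ z) (ρ z')) ωY p (ν.map fun z => (z, φ z)) =
      disP ωX ωY p (ν.map fun z => (ρ z, φ z)) := by
  have hωZ : Measurable fun q : Z × Z => ωX (ρ q.1) (ρ q.2) :=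
    hωX.comp ((hρ.comp measurable_fst).prodMk (hρ.comp measurable_snd))
  rw [disP_map hωZ hωY p ν (f := fun z => (z, φ z)) (measurable_id.prodMk hφ),
    disP_map hωX hωY p ν (hρ.prodMk hφ)]

lemma gwP_le_gmP_pullback (hωX : Measurable fun q : X × X => ωX q.1 q.2)
    (hωY : Measurable fun q : Y × Y => ωY q.1 q.2) {μX : Measure X} {μY : Measure Y} (p : ℝ)
    (ν : Measure Z) [IsProbabilityMeasure ν] {ρ : Z → X} (hρ : Measurable ρ)
    (hρν : ν.map ρ = μX) :
    gwP ωX ωY μX μY p ≤ gmP (fun z z' => ωX (ρ z) (ρ z')) ωY ν μY p := by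
  refine le_iInf₂ fun φ hφ => le_iInf fun hφν => ?_
  have hf : Measurable fun z => (ρ z, φ z) := hρ.prodMk hφ
  rw [disP_pullback_map_graph hωX hωY p ν hρ hφ]
  refine iInf₂_le_of_le _ (Measure.isProbabilityMeasure_map hf.aemeasurable)
    (iInf_le_of_le ⟨?_, ?_⟩ le_rfl)
  · rwa [Measure.map_map measurable_fst hf]
  · rwa [Measure.map_map measurable_snd hf]

lemma gmP_pullback_le_disP (hωX : Measurable fun q : X × X => ωX q.1 q.2)
    (hωY : Measurable fun q : Y × Y => ωY q.1 q.2) {μY : Measure Y} (p : ℝ)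
    (ν : Measure Z) [SFinite ν] {ρ : Z → X} {φ : Z → Y} (hρ : Measurable ρ) (hφ : Measurable φ)
    (hφν : ν.map φ = μY) :
    gmP (fun z z' => ωX (ρ z) (ρ z')) ωY ν μY p ≤ disP ωX ωY p (ν.map fun z => (ρ z, φ z)) :=
  iInf₂_le_of_le φ hφ <| iInf_le_of_le hφν (disP_pullback_map_graph hωX hωY p ν hρ hφ).le

end Distortion

noncomputable def MassSplitting.ofCoupling {X Y : Type} [MetricSpace X] [PolishSpace X]
    [MeasurableSpace X] [BorelSpace X] [TopologicalSpace Y] [PolishSpace Y] [MeasurableSpace Y]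
    [BorelSpace Y] {μX : Measure X} (π : Measure (X × Y)) [IsProbabilityMeasure π]
    (hπ : π.map Prod.fst = μX) : MassSplitting X μX where
  Z := π.support
  mZ := inferInstance
  tZ := inferInstance
  polish := Measure.isClosed_support.polishSpace
  borel := inferInstance
  μZ := π.comap (↑)
  prob := inferInstance
  fullSupp := inferInstance
  ρ := fun z => (z : X × Y).1
  meas_ρ := measurable_subtype_coe.fst
  push := by rw [Measure.map_comap_subtype_coe_support_comp π measurable_fst, hπ]

theorem gromovWasserstein_eq_iInf_massSplitting_gromovMonge_general
    {X Y : Type} [MetricSpace X] [PolishSpace X] [MeasurableSpace X] [BorelSpace X]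
    [MetricSpace Y] [PolishSpace Y] [MeasurableSpace Y] [BorelSpace Y]
    (μX : Measure X) (μY : Measure Y) (p : ℝ) :
    gwP (fun x x' => dist x x') (fun y y' => dist y y') μX μY p =
      ⨅ S : MassSplitting X μX,
        @gmP S.Z Y S.mZ _ S.ω (fun y y' => dist y y') S.μZ μY p := by
  refine le_antisymm (le_iInf fun S => ?_) (le_iInf₂ fun π _ => le_iInf fun ⟨hfst, hsnd⟩ => ?_)
  · let := S.mZ
    have := S.prob
    exact gwP_le_gmP_pullback measurable_dist measurable_dist p S.μZ S.meas_ρ S.push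
  · have hsnd' := (Measure.map_comap_subtype_coe_support_comp π measurable_snd).trans hsnd
    calc ⨅ S : MassSplitting X μX, @gmP S.Z Y S.mZ _ S.ω (fun y y' => dist y y') S.μZ μY p
        ≤ gmP (fun z z' : π.support => dist (z : X × Y).1 (z' : X × Y).1)
            (fun y y' => dist y y') (π.comap (↑)) μY p :=
          iInf_le _ (MassSplitting.ofCoupling π hfst)
      _ ≤ disP (fun x x' : X => dist x x') (fun y y' => dist y y') p
            ((π.comap ((↑) : π.support → X × Y)).map Subtype.val) :=
        gmP_pullback_le_disP measurable_dist measurable_dist p _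
          measurable_subtype_coe.fst measurable_subtype_coe.snd hsnd'
      _ = _ := by rw [Measure.map_comap_subtype_coe_support]

/-- Theorem `thm:monge_wasserstein_comparison`: for metric measure spaces
`𝒳`, `𝒴` and `p ∈ [1,∞)`, the Gromov–Wasserstein `p`-distance equals the infimum of the
Gromov–Monge `p`-distances `GM_p(𝒵,𝒴)` over all mass splittings `𝒵` of `𝒳`. -/
theorem gromovWasserstein_eq_iInf_massSplitting_gromovMonge
    {X Y : Type} [MetricSpace X] [PolishSpace X] [MeasurableSpace X] [BorelSpace X]
    [MetricSpace Y] [PolishSpace Y] [MeasurableSpace Y] [BorelSpace Y]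
    (μX : Measure X) [IsProbabilityMeasure μX] [μX.IsOpenPosMeasure]
    (μY : Measure Y) [IsProbabilityMeasure μY] [μY.IsOpenPosMeasure]
    (p : ℝ) (hp : 1 ≤ p) :
    gwP (fun x x' => dist x x') (fun y y' => dist y y') μX μY p =
      ⨅ S : MassSplitting X μX,
        @gmP S.Z Y S.mZ _ S.ω (fun y y' => dist y y') S.μZ μY p :=
  gromovWasserstein_eq_iInf_massSplitting_gromovMonge_general μX μY p
end

section
/- For all metric measure spaces 𝒳, 𝒴 and every p ∈ [1,∞], (1/2)·GM_p(𝒳,𝒴) ≤ GM^em_p(𝒳,𝒴). -/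
open MeasureTheory ENNReal

/-- The Wasserstein `p`-distance (`p ∈ [1,∞]`) between two Borel measures on a metric
space, as an infimum over couplings. -/
noncomputable def wassersteinD (Z : Type) [MetricSpace Z] [MeasurableSpace Z]
    (μ ν : Measure Z) (p : ℝ≥0∞) : ℝ≥0∞ :=
  ⨅ (π : Measure (Z × Z)) (_ : IsProbabilityMeasure π)
    (_ : π.map Prod.fst = μ ∧ π.map Prod.snd = ν),
    if p = ⊤ then
      ⨆ (z : Z × Z) (_ : ∀ U ∈ nhds z, 0 < π U), ENNReal.ofReal (dist z.1 z.2)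
    else
      (∫⁻ z : Z × Z, ENNReal.ofReal (dist z.1 z.2) ^ p.toReal ∂π) ^ (1 / p.toReal)

/-- The Monge `p`-distance (`p ∈ [1,∞]`) between two Borel measures on a metric space:
the infimum over measure-preserving maps `φ` of the `L^p(μ)`-norm of `z ↦ d(z, φ z)`
(for `p = ∞`, of the supremum of `d(z, φ z)` over the support of `μ`); it is `⊤` when no
measure-preserving map exists. -/
noncomputable def mongeD (Z : Type) [MetricSpace Z] [MeasurableSpace Z]
    (μ ν : Measure Z) (p : ℝ≥0∞) : ℝ≥0∞ :=
  ⨅ (φ : Z → Z) (_ : Measurable φ) (_ : μ.map φ = ν),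
    if p = ⊤ then
      ⨆ (z : Z) (_ : ∀ U ∈ nhds z, 0 < μ U), ENNReal.ofReal (dist z (φ z))
    else
      (∫⁻ z : Z, ENNReal.ofReal (dist z (φ z)) ^ p.toReal ∂μ) ^ (1 / p.toReal)

/-- `φ : X → Z` is an isometric embedding of the metric `dX` into the metric space `Z`. -/
def isoEmb {X Z : Type} (dX : X → X → ℝ) [MetricSpace Z] (φ : X → Z) : Prop :=
  ∀ a b : X, dist (φ a) (φ b) = dX a b

/-- The embedding Gromov–Wasserstein `p`-distance between metric measure spaces
`(X, dX, μX)` and `(Y, dY, μY)`: the infimum of Wasserstein distances between the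
pushforwards under isometric embeddings into a common ambient metric space. -/
noncomputable def gwEm {X Y : Type} [MeasurableSpace X] [MeasurableSpace Y]
    (dX : X → X → ℝ) (dY : Y → Y → ℝ) (μX : Measure X) (μY : Measure Y) (p : ℝ≥0∞) : ℝ≥0∞ :=
  ⨅ (Z : Type) (iZ : MetricSpace Z) (φX : X → Z) (φY : Y → Z)
    (_ : @isoEmb X Z dX iZ φX) (_ : @isoEmb Y Z dY iZ φY),
    @wassersteinD Z iZ (borel Z)
      (@Measure.map X Z _ (borel Z) φX μX) (@Measure.map Y Z _ (borel Z) φY μY) p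

/-- The embedding Gromov–Monge `p`-distance between metric measure spaces: the infimum of
Monge distances between the pushforwards under isometric embeddings into a common ambient
metric space. -/
noncomputable def gmEm {X Y : Type} [MeasurableSpace X] [MeasurableSpace Y]
    (dX : X → X → ℝ) (dY : Y → Y → ℝ) (μX : Measure X) (μY : Measure Y) (p : ℝ≥0∞) : ℝ≥0∞ :=
  ⨅ (Z : Type) (iZ : MetricSpace Z) (φX : X → Z) (φY : Y → Z)
    (_ : @isoEmb X Z dX iZ φX) (_ : @isoEmb Y Z dY iZ φY),
    @mongeD Z iZ (borel Z)
      (@Measure.map X Z _ (borel Z) φX μX) (@Measure.map Y Z _ (borel Z) φY μY) p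

/-- The `p`-distortion (`p ∈ [1,∞]`) of a map `φ` between metric measure spaces. -/
noncomputable def disMapMM {X Y : Type} [MetricSpace X] [MetricSpace Y] [MeasurableSpace X]
    (μX : Measure X) (p : ℝ≥0∞) (φ : X → Y) : ℝ≥0∞ :=
  if p = ⊤ then
    ⨆ (x : X) (x' : X), ENNReal.ofReal |dist x x' - dist (φ x) (φ x')|
  else
    (∫⁻ q : X × X,
      ENNReal.ofReal |dist q.1 q.2 - dist (φ q.1) (φ q.2)| ^ p.toReal ∂(μX.prod μX)) ^ (1 / p.toReal)

/-- The Gromov–Monge `p`-distance (`p ∈ [1,∞]`) between metric measure spaces: the infimum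
of `p`-distortions over measure-preserving maps (`⊤` if there is none). -/
noncomputable def gmMM {X Y : Type} [MetricSpace X] [MetricSpace Y]
    [MeasurableSpace X] [MeasurableSpace Y]
    (μX : Measure X) (μY : Measure Y) (p : ℝ≥0∞) : ℝ≥0∞ :=
  ⨅ (φ : X → Y) (_ : Measurable φ) (_ : μX.map φ = μY), disMapMM μX p φ

/-! Embed `X` and `Y` isometrically into `Z` and let `ψ` be a Monge map from the image of `μX` to
the image of `μY`. Since `Y` is Polish, its embedding is a measurable embedding, so `ψ` pulls back
to a measure-preserving map `g : X → Y` with `φY ∘ g = ψ ∘ φX` almost everywhere. The triangle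
inequality in `Z` bounds `|d(x, x') - d(g x, g x')|` by `d(φX x, ψ (φX x)) + d(φX x', ψ (φX x'))`,
and Minkowski's inequality turns this into `dis_p(g) ≤ 2 · cost_p(ψ)`. For `p = ∞` the distortion
is a supremum over all pairs: full support of `μX` makes the pointwise cost bound hold everywhere,
and `g` is corrected on its exceptional null set by moving each point to a nearby good one. -/

open Set Filter Topology

theorem MeasurableEmbedding.exists_measurable_lift_of_map_eq {X Y Z : Type*} [MeasurableSpace X]
    [MeasurableSpace Y] [MeasurableSpace Z] [Nonempty Y] {ι : Y → Z} (hι : MeasurableEmbedding ι)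
    {μ : Measure X} {ν : Measure Y} {f : X → Z} (hf : Measurable f) (h : μ.map f = ν.map ι) :
    ∃ g : X → Y, Measurable g ∧ μ.map g = ν ∧ ∀ᵐ x ∂μ, ι (g x) = f x := by
  refine ⟨hι.invFun ∘ f, hι.measurable_invFun.comp hf, ?_, ?_⟩
  · rw [← Measure.map_map hι.measurable_invFun hf, h,
      Measure.map_map hι.measurable_invFun hι.measurable, hι.leftInverse_invFun.comp_eq_id,
      Measure.map_id]
  · have hrange : ∀ᵐ z ∂μ.map f, z ∈ range ι := by
      rw [h, hι.ae_map_iff]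
      exact Eventually.of_forall mem_range_self
    filter_upwards [ae_of_ae_map hf.aemeasurable hrange] with x ⟨y, hy⟩
    rw [Function.comp_apply, ← hy, hι.leftInverse_invFun y]

theorem Dense.exists_measurable_retraction {X : Type*} [PseudoMetricSpace X]
    [SecondCountableTopology X] [MeasurableSpace X] [OpensMeasurableSpace X] {s : Set X}
    (hs : Dense s) (hsm : MeasurableSet s) {δ : ℝ} (hδ : 0 < δ) :
    ∃ r : X → X, Measurable r ∧ (∀ x, r x ∈ s ∧ dist x (r x) < δ) ∧ ∀ x ∈ s, r x = x := by
  classical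
  rcases isEmpty_or_nonempty X with hX | hX
  · exact ⟨id, measurable_id, isEmptyElim, fun x _ => rfl⟩
  obtain ⟨t, hts, htc, htd⟩ := hs.exists_countable_dense_subset
  obtain ⟨e, rfl⟩ := htc.exists_eq_range htd.nonempty
  have hcover : ∀ x, ∃ n, x ∈ Metric.ball (e n) δ := fun x => by
    obtain ⟨_, ⟨n, rfl⟩, hn⟩ := htd.exists_dist_lt x hδ
    exact ⟨n, hn⟩
  refine ⟨s.piecewise id fun x => e (Nat.find (hcover x)), Measurable.piecewise hsm measurable_id
    (Measurable.find (fun n => measurable_const) (fun n => measurableSet_ball) hcover),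
    fun x => ?_, fun x hx => piecewise_eq_of_mem _ _ _ hx⟩
  by_cases hx : x ∈ s
  · simpa [hx] using hδ
  · simpa [hx] using ⟨hts (mem_range_self _), Nat.find_spec (hcover x)⟩

theorem Continuous.map_apply_pos_of_mem_nhds {X Y : Type*} [TopologicalSpace X]
    [MeasurableSpace X] [OpensMeasurableSpace X] [TopologicalSpace Y] [MeasurableSpace Y]
    [BorelSpace Y] {μ : Measure X} [μ.IsOpenPosMeasure] {f : X → Y} (hf : Continuous f) {x : X}
    {U : Set Y} (hU : U ∈ 𝓝 (f x)) : 0 < μ.map f U :=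
  (μ.measure_pos_of_mem_nhds (hf.continuousAt hU)).trans_le
    (Measure.le_map_apply hf.measurable.aemeasurable U)

theorem lintegral_prod_add_rpow_le {X : Type*} [MeasurableSpace X] (μ : Measure X)
    [IsProbabilityMeasure μ] {F : X → ℝ≥0∞} (hF : Measurable F) {q : ℝ} (hq : 1 ≤ q) :
    (∫⁻ z, (F z.1 + F z.2) ^ q ∂μ.prod μ) ^ (1 / q) ≤ 2 * (∫⁻ x, F x ^ q ∂μ) ^ (1 / q) := by
  have hFq : Measurable fun x => F x ^ q := hF.pow_const q
  calc (∫⁻ z, (F z.1 + F z.2) ^ q ∂μ.prod μ) ^ (1 / q)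
      ≤ (∫⁻ z, F z.1 ^ q ∂μ.prod μ) ^ (1 / q) + (∫⁻ z, F z.2 ^ q ∂μ.prod μ) ^ (1 / q) :=
        ENNReal.lintegral_Lp_add_le (hF.comp measurable_fst).aemeasurable
          (hF.comp measurable_snd).aemeasurable hq
    _ = 2 * (∫⁻ x, F x ^ q ∂μ) ^ (1 / q) := by
        rw [measurePreserving_fst.lintegral_comp hFq, measurePreserving_snd.lintegral_comp hFq,
          two_mul]

noncomputable def mongeCost {Z : Type} [MetricSpace Z] [MeasurableSpace Z] (μ : Measure Z)
    (p : ℝ≥0∞) (ψ : Z → Z) : ℝ≥0∞ :=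
  if p = ⊤ then
    ⨆ (z : Z) (_ : ∀ U ∈ 𝓝 z, 0 < μ U), ENNReal.ofReal (dist z (ψ z))
  else
    (∫⁻ z : Z, ENNReal.ofReal (dist z (ψ z)) ^ p.toReal ∂μ) ^ (1 / p.toReal)

theorem mongeD_eq_iInf_mongeCost (Z : Type) [MetricSpace Z] [MeasurableSpace Z]
    (μ ν : Measure Z) (p : ℝ≥0∞) :
    mongeD Z μ ν p = ⨅ (ψ : Z → Z) (_ : Measurable ψ) (_ : μ.map ψ = ν), mongeCost μ p ψ :=
  rfl

section GromovMonge

variable {X Y Z : Type} [MetricSpace X] [MetricSpace Y] [MetricSpace Z] {φX : X → Z} {φY : Y → Z}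

theorem abs_dist_sub_dist_le_of_isometry (hX : Isometry φX) (hY : Isometry φY) (φ : X → Y)
    (x x' : X) :
    |dist x x' - dist (φ x) (φ x')| ≤ dist (φX x) (φY (φ x)) + dist (φX x') (φY (φ x')) := by
  rw [← hX.dist_eq, ← hY.dist_eq, ← Real.dist_eq]
  exact dist_dist_dist_le _ _ _ _

variable [MeasurableSpace X]

theorem disMapMM_top_le (hX : Isometry φX) (hY : Isometry φY) (μX : Measure X) {φ : X → Y}
    {C : ℝ≥0∞} (hC : ∀ x, ENNReal.ofReal (dist (φX x) (φY (φ x))) ≤ C) :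
    disMapMM μX ⊤ φ ≤ 2 * C := by
  rw [disMapMM, if_pos rfl]
  refine iSup₂_le fun x x' => ?_
  calc ENNReal.ofReal |dist x x' - dist (φ x) (φ x')|
      ≤ ENNReal.ofReal (dist (φX x) (φY (φ x)) + dist (φX x') (φY (φ x'))) :=
        ENNReal.ofReal_le_ofReal (abs_dist_sub_dist_le_of_isometry hX hY φ x x')
    _ ≤ C + C := by rw [ENNReal.ofReal_add dist_nonneg dist_nonneg]; exact add_le_add (hC x) (hC x')
    _ = 2 * C := (two_mul C).symm

theorem disMapMM_le_of_ne_top (hX : Isometry φX) (hY : Isometry φY) (μX : Measure X)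
    [IsProbabilityMeasure μX] {p : ℝ≥0∞} (hp : 1 ≤ p) (hp_top : p ≠ ⊤) {φ : X → Y}
    (hφ : Measurable fun x => dist (φX x) (φY (φ x))) :
    disMapMM μX p φ ≤
      2 * (∫⁻ x, ENNReal.ofReal (dist (φX x) (φY (φ x))) ^ p.toReal ∂μX) ^ (1 / p.toReal) := by
  have hq : 1 ≤ p.toReal := by simpa using ENNReal.toReal_mono hp_top hp
  have hF : Measurable fun x => ENNReal.ofReal (dist (φX x) (φY (φ x))) :=
    ENNReal.measurable_ofReal.comp hφ
  rw [disMapMM, if_neg hp_top]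
  refine le_trans (ENNReal.rpow_le_rpow (lintegral_mono fun z => ENNReal.rpow_le_rpow ?_
    (by positivity)) (by positivity)) (lintegral_prod_add_rpow_le μX hF hq)
  rw [← ENNReal.ofReal_add dist_nonneg dist_nonneg]
  exact ENNReal.ofReal_le_ofReal (abs_dist_sub_dist_le_of_isometry hX hY φ z.1 z.2)

variable [MeasurableSpace Y]

theorem gmMM_le_disMapMM (μX : Measure X) (μY : Measure Y) (p : ℝ≥0∞) {φ : X → Y}
    (hφ : Measurable φ) (hφμ : μX.map φ = μY) : gmMM μX μY p ≤ disMapMM μX p φ :=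
  iInf₂_le_of_le φ hφ (iInf_le _ hφμ)

theorem gmMM_top_le [SecondCountableTopology X] [OpensMeasurableSpace X] (hX : Isometry φX)
    (hY : Isometry φY) (μX : Measure X) [μX.IsOpenPosMeasure] (μY : Measure Y) {f : X → Z}
    {g : X → Y} (hg : Measurable g) (hgμ : μX.map g = μY) (hgf : ∀ᵐ x ∂μX, φY (g x) = f x)
    {C : ℝ≥0∞} (hC : ∀ x, ENNReal.ofReal (dist (φX x) (f x)) ≤ C) :
    gmMM μX μY ⊤ ≤ 2 * C := by
  refine ENNReal.le_of_forall_pos_le_add fun ε hε _ => ?_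
  obtain ⟨s, hs_ae, hsm, hsf⟩ := hgf.exists_measurable_mem
  obtain ⟨r, hr, hrs, hr_id⟩ :=
    (μX.dense_of_ae hs_ae).exists_measurable_retraction hsm (half_pos (NNReal.coe_pos.2 hε))
  have hgr : ∀ x, ENNReal.ofReal (dist (φX x) (φY (g (r x)))) ≤ ENNReal.ofReal (ε / 2) + C := by
    intro x
    rw [hsf _ (hrs x).1, ← edist_dist]
    calc edist (φX x) (f (r x)) ≤ edist (φX x) (φX (r x)) + edist (φX (r x)) (f (r x)) :=
          edist_triangle _ _ _
      _ ≤ ENNReal.ofReal (ε / 2) + C := by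
          rw [hX.edist_eq, edist_dist, edist_dist]
          exact add_le_add (ENNReal.ofReal_le_ofReal (hrs x).2.le) (hC _)
  have hgrμ : μX.map (g ∘ r) = μY := by
    rw [← hgμ]
    refine Measure.map_congr ?_
    filter_upwards [hs_ae] with x hx using congrArg g (hr_id x hx)
  calc gmMM μX μY ⊤ ≤ disMapMM μX ⊤ (g ∘ r) := gmMM_le_disMapMM μX μY ⊤ (hg.comp hr) hgrμ
    _ ≤ 2 * (ENNReal.ofReal (ε / 2) + C) := disMapMM_top_le hX hY μX hgr
    _ = 2 * C + ε := by
        rw [mul_add, add_comm, ← ENNReal.ofReal_ofNat 2, ← ENNReal.ofReal_mul zero_le_two,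
          mul_div_cancel₀ _ two_ne_zero, ENNReal.ofReal_coe_nnreal, ENNReal.ofReal_ofNat]

theorem gmMM_le_of_ne_top [SecondCountableTopology X] [OpensMeasurableSpace X]
    [SecondCountableTopology Y] [OpensMeasurableSpace Y] (hX : Isometry φX) (hY : Isometry φY)
    (μX : Measure X) [IsProbabilityMeasure μX] (μY : Measure Y) {f : X → Z} {g : X → Y}
    (hg : Measurable g) (hgμ : μX.map g = μY) (hgf : ∀ᵐ x ∂μX, φY (g x) = f x) {p : ℝ≥0∞}
    (hp : 1 ≤ p) (hp_top : p ≠ ⊤) :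
    gmMM μX μY p ≤
      2 * (∫⁻ x, ENNReal.ofReal (dist (φX x) (f x)) ^ p.toReal ∂μX) ^ (1 / p.toReal) := by
  have hdist : Measurable fun x => dist (φX x) (φY (g x)) :=
    (hX.continuous.stronglyMeasurable.dist
      (hY.continuous.comp_stronglyMeasurable hg.stronglyMeasurable)).measurable
  calc gmMM μX μY p ≤ disMapMM μX p g := gmMM_le_disMapMM μX μY p hg hgμ
    _ ≤ _ := disMapMM_le_of_ne_top hX hY μX hp hp_top hdist
    _ = _ := by
        congr 2
        refine lintegral_congr_ae ?_
        filter_upwards [hgf] with x hx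
        rw [hx]

end GromovMonge

theorem gmMM_le_two_mul_mongeCost {X Y Z : Type} [MetricSpace X] [PolishSpace X]
    [MeasurableSpace X] [BorelSpace X] [MetricSpace Y] [PolishSpace Y] [MeasurableSpace Y]
    [BorelSpace Y] [MetricSpace Z] [MeasurableSpace Z] [BorelSpace Z]
    (μX : Measure X) [IsProbabilityMeasure μX] [μX.IsOpenPosMeasure]
    (μY : Measure Y) [IsProbabilityMeasure μY] {φX : X → Z} {φY : Y → Z} (hX : Isometry φX)
    (hY : Isometry φY) {ψ : Z → Z} (hψ : Measurable ψ) (hψμ : (μX.map φX).map ψ = μY.map φY)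
    {p : ℝ≥0∞} (hp : 1 ≤ p) :
    gmMM μX μY p ≤ 2 * mongeCost (μX.map φX) p ψ := by
  have := nonempty_of_isProbabilityMeasure μY
  have hφX := hX.continuous.measurableEmbedding hX.injective
  obtain ⟨g, hg, hgμ, hgψ⟩ :=
    (hY.continuous.measurableEmbedding hY.injective).exists_measurable_lift_of_map_eq
      (hψ.comp hφX.measurable) (by rw [← Measure.map_map hψ hφX.measurable, hψμ])
  rcases eq_or_ne p ⊤ with rfl | hp_top
  · rw [mongeCost, if_pos rfl]
    exact gmMM_top_le hX hY μX μY hg hgμ hgψ fun x =>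
      le_iSup₂ (f := fun z (_ : ∀ U ∈ 𝓝 z, 0 < μX.map φX U) => ENNReal.ofReal (dist z (ψ z)))
        (φX x) fun _ => hX.continuous.map_apply_pos_of_mem_nhds
  · rw [mongeCost, if_neg hp_top, hφX.lintegral_map]
    exact gmMM_le_of_ne_top hX hY μX μY hg hgμ hgψ hp hp_top

theorem half_gromovMonge_le_gmEm_general
    {X Y : Type} [MetricSpace X] [PolishSpace X] [MeasurableSpace X] [BorelSpace X]
    [MetricSpace Y] [PolishSpace Y] [MeasurableSpace Y] [BorelSpace Y]
    (μX : Measure X) [IsProbabilityMeasure μX] [μX.IsOpenPosMeasure]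
    (μY : Measure Y) [IsProbabilityMeasure μY]
    (p : ℝ≥0∞) (hp : 1 ≤ p) :
    (2 : ℝ≥0∞)⁻¹ * gmMM μX μY p ≤
      gmEm (fun x x' => dist x x') (fun y y' => dist y y') μX μY p := by
  refine le_iInf fun Z => le_iInf fun iZ => le_iInf fun φX => le_iInf fun φY =>
    le_iInf fun hX => le_iInf fun hY => ?_
  let : MeasurableSpace Z := borel Z
  have : BorelSpace Z := ⟨rfl⟩
  rw [mongeD_eq_iInf_mongeCost]
  refine le_iInf₂ fun ψ hψ => le_iInf fun hψμ => ?_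
  rw [ENNReal.inv_mul_le_iff two_ne_zero ENNReal.ofNat_ne_top]
  exact gmMM_le_two_mul_mongeCost μX μY (.of_dist_eq hX) (.of_dist_eq hY) hψ hψμ hp

/-- Theorem `thm:gromov_monge_reformulation`, inequality: for all metric
measure spaces `𝒳`, `𝒴` and every `p ∈ [1,∞]`, `(1/2)·GM_p(𝒳,𝒴) ≤ GM^em_p(𝒳,𝒴)`. -/
theorem half_gromovMonge_le_gmEm
    {X Y : Type} [MetricSpace X] [PolishSpace X] [MeasurableSpace X] [BorelSpace X]
    [MetricSpace Y] [PolishSpace Y] [MeasurableSpace Y] [BorelSpace Y]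
    (μX : Measure X) [IsProbabilityMeasure μX] [μX.IsOpenPosMeasure]
    (μY : Measure Y) [IsProbabilityMeasure μY] [μY.IsOpenPosMeasure]
    (p : ℝ≥0∞) (hp : 1 ≤ p) :
    (2 : ℝ≥0∞)⁻¹ * gmMM μX μY p ≤
      gmEm (fun x x' => dist x x') (fun y y' => dist y y') μX μY p :=
  half_gromovMonge_le_gmEm_general μX μY p hp
end

section
/- For all metric measure spaces 𝒳 and 𝒴, (1/2)·GM_∞(𝒳,𝒴) = GM^em_∞(𝒳,𝒴). -/
open MeasureTheory ENNReal

/-!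
If `T : X → Y` is measure preserving with distortion `D`, then for every `r > D / 2` the spaces
`X` and `Y` can be glued into `X ⊕ Y` so that each `x` sits at distance `r` from `T x`; the map
moving `x` to `T x` and fixing `Y` is then a Monge map of displacement `r`, so
`GM^em_∞ ≤ GM_∞ / 2`.

Conversely, let `X` and `Y` sit isometrically in `Z` and let `ψ` push `μX` onto `μY` moving each
point of the support of `μX` (which is all of `X`) by at most `M`. For almost every `x`, `ψ x`
lies in `Y`, which defines `T x`; on the remaining null set every `x` is still within `M + δ` of
`Y`, since a small ball around `x` meets the good set, and there `T x` is a measurably chosen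
point of a dense sequence. Such a `T` is measure preserving and, by the triangle inequality,
has distortion at most `2 (M + δ)`.
-/

open Set Metric Topology

instance Sum.borelSpace {X Y : Type*} [TopologicalSpace X] [MeasurableSpace X] [BorelSpace X]
    [TopologicalSpace Y] [MeasurableSpace Y] [BorelSpace Y] : BorelSpace (X ⊕ Y) := by
  refine ⟨le_antisymm (fun s hs => ?_) (MeasurableSpace.generateFrom_le fun s hs =>
    measurableSet_sum_iff.2 ⟨(hs.preimage continuous_inl).measurableSet,
      (hs.preimage continuous_inr).measurableSet⟩)⟩
  obtain ⟨hl, hr⟩ := measurableSet_sum_iff.1 hs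
  rw [← image_preimage_inl_union_image_preimage_inr s]
  let := borel (X ⊕ Y)
  have : BorelSpace (X ⊕ Y) := ⟨rfl⟩
  exact (IsOpenEmbedding.inl.measurableEmbedding.measurableSet_image.2 hl).union
    (IsOpenEmbedding.inr.measurableEmbedding.measurableSet_image.2 hr)

theorem ENNReal.le_of_forall_pos_lt_ofReal {a b : ℝ≥0∞}
    (h : ∀ r : ℝ, 0 < r → b < ENNReal.ofReal r → a ≤ ENNReal.ofReal r) : a ≤ b := by
  refine le_of_forall_gt_imp_ge_of_dense fun c hbc => ?_
  rcases eq_or_ne c ⊤ with rfl | hc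
  · exact le_top
  · have hc0 : 0 < c.toReal := ENNReal.toReal_pos (zero_le.trans_lt hbc).ne' hc
    rw [← ENNReal.ofReal_toReal hc] at hbc ⊢
    exact h _ hc0 hbc

theorem mongeD_top_le_ofReal {Z : Type} [MetricSpace Z] [MeasurableSpace Z] {μ ν : Measure Z}
    {ψ : Z → Z} (hψ : Measurable ψ) (hψμ : μ.map ψ = ν) {c : ℝ} (hc : ∀ z, dist z (ψ z) ≤ c) :
    mongeD Z μ ν ⊤ ≤ ENNReal.ofReal c :=
  iInf₂_le_of_le ψ hψ <| iInf_le_of_le hψμ <| by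
    rw [if_pos rfl]
    exact iSup₂_le fun z _ => ENNReal.ofReal_le_ofReal (hc z)

section Distortion

variable {X Y : Type} [MetricSpace X] [MetricSpace Y] [MeasurableSpace X]

theorem ofReal_abs_dist_sub_le_disMapMM (μX : Measure X) (T : X → Y) (p q : X) :
    ENNReal.ofReal |dist p q - dist (T p) (T q)| ≤ disMapMM μX ⊤ T := by
  rw [disMapMM, if_pos rfl]
  exact le_iSup₂ (f := fun x x' => ENNReal.ofReal |dist x x' - dist (T x) (T x')|) p q

theorem disMapMM_top_le_of_dist_le {Z : Type*} [PseudoMetricSpace Z] (μX : Measure X)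
    {T : X → Y} {φX : X → Z} {φY : Y → Z} (hφX : Isometry φX) (hφY : Isometry φY) {r : ℝ}
    (hr : ∀ x, dist (φX x) (φY (T x)) ≤ r) :
    disMapMM μX ⊤ T ≤ ENNReal.ofReal (2 * r) := by
  rw [disMapMM, if_pos rfl]
  refine iSup₂_le fun x x' => ENNReal.ofReal_le_ofReal ?_
  rw [← hφX.dist_eq, ← hφY.dist_eq, ← Real.dist_eq, two_mul]
  exact (dist_dist_dist_le _ _ _ _).trans (add_le_add (hr x) (hr x'))

end Distortion

section UpperBound

variable {X Y : Type} [MetricSpace X] [MeasurableSpace X] [BorelSpace X]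
    [MetricSpace Y] [MeasurableSpace Y] [BorelSpace Y] {μX : Measure X} {μY : Measure Y}

theorem gmEm_le_ofReal_of_abs_dist_sub_le [Nonempty X] {T : X → Y} (hT : Measurable T)
    (hTμ : μX.map T = μY) {r : ℝ} (hr : 0 < r)
    (H : ∀ p q, |dist p q - dist (T p) (T q)| ≤ 2 * r) :
    gmEm (fun x x' => dist x x') (fun y y' => dist y y') μX μY ⊤ ≤ ENNReal.ofReal r := by
  let iZ : MetricSpace (X ⊕ Y) := glueMetricApprox id T r hr H
  set ψ : X ⊕ Y → X ⊕ Y := Sum.elim (Sum.inr ∘ T) Sum.inr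
  have hψ : Measurable ψ := (measurable_inr.comp hT).sumElim measurable_inr
  have hψμ : (μX.map Sum.inl).map ψ = μY.map Sum.inr := by
    rw [Measure.map_map hψ measurable_inl, Sum.elim_comp_inl,
      ← Measure.map_map measurable_inr hT, hTμ]
  have hdisp : ∀ z, dist z (ψ z) ≤ r := by
    rintro (x | y)
    · exact (glueDist_glued_points id T r x).le
    · exact (dist_self _).trans_le hr.le
  have hemb : gmEm (fun x x' => dist x x') (fun y y' => dist y y') μX μY ⊤ ≤
      @mongeD (X ⊕ Y) iZ (borel (X ⊕ Y)) (@Measure.map _ _ _ (borel _) Sum.inl μX)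
        (@Measure.map _ _ _ (borel _) Sum.inr μY) ⊤ :=
    iInf_le_of_le (X ⊕ Y) <| iInf_le_of_le iZ <| iInf₂_le_of_le Sum.inl Sum.inr <|
      iInf₂_le_of_le (fun _ _ => rfl) (fun _ _ => rfl) le_rfl
  -- `gmEm` uses the Borel σ-algebra of the glued metric, which is the sum σ-algebra.
  rw [← BorelSpace.measurable_eq] at hemb
  exact hemb.trans (mongeD_top_le_ofReal hψ hψμ hdisp)

theorem two_mul_gmEm_le_disMapMM [Nonempty X] {T : X → Y} (hT : Measurable T)
    (hTμ : μX.map T = μY) :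
    2 * gmEm (fun x x' => dist x x') (fun y y' => dist y y') μX μY ⊤ ≤ disMapMM μX ⊤ T := by
  refine ENNReal.le_of_forall_pos_lt_ofReal fun r hr hTr => ?_
  have H : ∀ p q, |dist p q - dist (T p) (T q)| ≤ 2 * (r / 2) := fun p q => by
    rw [mul_div_cancel₀ r two_ne_zero]
    exact (ENNReal.ofReal_le_ofReal_iff hr.le).1
      ((ofReal_abs_dist_sub_le_disMapMM μX T p q).trans hTr.le)
  calc 2 * gmEm (fun x x' => dist x x') (fun y y' => dist y y') μX μY ⊤
      ≤ 2 * ENNReal.ofReal (r / 2) := by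
        gcongr; exact gmEm_le_ofReal_of_abs_dist_sub_le hT hTμ (half_pos hr) H
    _ = ENNReal.ofReal r := by
        rw [← ENNReal.ofReal_ofNat 2, ← ENNReal.ofReal_mul zero_le_two, mul_div_cancel₀ r two_ne_zero]

theorem gmEm_le_inv_two_mul_gmMM [Nonempty X] :
    gmEm (fun x x' => dist x x') (fun y y' => dist y y') μX μY ⊤ ≤ 2⁻¹ * gmMM μX μY ⊤ := by
  rw [← ENNReal.div_eq_inv_mul, ENNReal.le_div_iff_mul_le (Or.inl two_ne_zero)
    (Or.inl ENNReal.ofNat_ne_top), mul_comm]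
  exact le_iInf fun _ => le_iInf fun hT => le_iInf fun hTμ => two_mul_gmEm_le_disMapMM hT hTμ

end UpperBound

theorem exists_measurable_dist_lt {X Y Z : Type*} [TopologicalSpace X] [MeasurableSpace X]
    [OpensMeasurableSpace X] [TopologicalSpace Y] [TopologicalSpace.SeparableSpace Y] [Nonempty Y]
    [MeasurableSpace Y] [PseudoMetricSpace Z] {f : X → Z} {g : Y → Z} (hf : Continuous f)
    (hg : Continuous g) {r : ℝ} (h : ∀ x, ∃ y, dist (f x) (g y) < r) :
    ∃ T : X → Y, Measurable T ∧ ∀ x, dist (f x) (g (T x)) < r := by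
  classical
  set u := TopologicalSpace.denseSeq Y
  have hu : ∀ x, ∃ n, dist (f x) (g (u n)) < r := fun x =>
    (TopologicalSpace.denseRange_denseSeq Y).exists_mem_open
      (isOpen_lt (continuous_const.dist hg) continuous_const) (h x)
  refine ⟨fun x => u (Nat.find (hu x)), measurable_from_nat.comp (measurable_find hu fun n => ?_),
    fun x => Nat.find_spec (hu x)⟩
  exact (isOpen_lt (hf.dist continuous_const) continuous_const).measurableSet

theorem pos_map_measure_of_mem_nhds {X Z : Type*} [TopologicalSpace X] [MeasurableSpace X]
    [OpensMeasurableSpace X] [TopologicalSpace Z] [MeasurableSpace Z] [BorelSpace Z]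
    {μ : Measure X} [μ.IsOpenPosMeasure] {φ : X → Z} (hφ : Continuous φ) (x : X) {U : Set Z}
    (hU : U ∈ 𝓝 (φ x)) : 0 < μ.map φ U :=
  (μ.measure_pos_of_mem_nhds (hφ.continuousAt hU)).trans_le
    (Measure.le_map_apply hφ.aemeasurable U)

section LowerBound

variable {X Y : Type} [MetricSpace X] [MeasurableSpace X] [BorelSpace X]
    [MetricSpace Y] [PolishSpace Y] [MeasurableSpace Y] [BorelSpace Y] [Nonempty Y]
    {μX : Measure X} [μX.IsOpenPosMeasure] {μY : Measure Y}

theorem exists_measurePreserving_dist_lt {Z : Type} [MetricSpace Z] [MeasurableSpace Z]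
    [BorelSpace Z] {φX : X → Z} {φY : Y → Z} (hφX : Isometry φX) (hφY : Isometry φY)
    {ψ : Z → Z} (hψ : Measurable ψ) (hψμ : (μX.map φX).map ψ = μY.map φY) {M r : ℝ}
    (hM : ∀ x, dist (φX x) (ψ (φX x)) ≤ M) (hMr : M < r) :
    ∃ T : X → Y, MeasurePreserving T μX μY ∧ ∀ x, dist (φX x) (φY (T x)) < r := by
  classical
  have hφXm : Measurable φX := hφX.continuous.measurable
  have hφYe : MeasurableEmbedding φY := hφY.continuous.measurableEmbedding hφY.injective
  obtain ⟨π, hπ, hπφY⟩ := hφYe.exists_measurable_extend measurable_id fun _ => ‹Nonempty Y›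
  set G := (ψ ∘ φX) ⁻¹' range φY
  have hG : ∀ᵐ x ∂μX, x ∈ G := by
    have : ∀ᵐ z ∂(μX.map φX).map ψ, z ∈ range φY := by
      rw [hψμ]
      exact hφYe.ae_map_iff.2 (ae_of_all _ mem_range_self)
    exact ae_of_ae_map hφXm.aemeasurable (ae_of_ae_map hψ.aemeasurable this)
  have hπG : ∀ x ∈ G, φY (π (ψ (φX x))) = ψ (φX x) := by
    rintro x ⟨y, hy : φY y = ψ (φX x)⟩
    rw [← hy]
    exact congrArg φY (congrFun hπφY y)
  have hnear : ∀ x, ∃ y, dist (φX x) (φY y) < r := fun x => by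
    obtain ⟨x', hx', hx'G⟩ := Measure.exists_mem_of_measure_ne_zero_of_ae
      (measure_ball_pos μX x (sub_pos.2 hMr)).ne' (ae_restrict_of_ae hG)
    refine ⟨π (ψ (φX x')), ?_⟩
    rw [hπG x' hx'G]
    calc dist (φX x) (ψ (φX x')) ≤ dist (φX x) (φX x') + dist (φX x') (ψ (φX x')) :=
          dist_triangle _ _ _
      _ < (r - M) + M := by
          rw [hφX.dist_eq, dist_comm]
          exact add_lt_add_of_lt_of_le hx' (hM x')
      _ = r := sub_add_cancel r M
  obtain ⟨T₀, hT₀, hT₀r⟩ := exists_measurable_dist_lt hφX.continuous hφY.continuous hnear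
  have hGm : MeasurableSet G := (hψ.comp hφXm) hφYe.measurableSet_range
  refine ⟨G.piecewise (π ∘ ψ ∘ φX) T₀, ⟨(hπ.comp (hψ.comp hφXm)).piecewise hGm hT₀, ?_⟩,
    fun x => ?_⟩
  · calc μX.map (G.piecewise (π ∘ ψ ∘ φX) T₀) = μX.map (π ∘ ψ ∘ φX) :=
          Measure.map_congr (by filter_upwards [hG] with x hx using piecewise_eq_of_mem _ _ _ hx)
      _ = ((μX.map φX).map ψ).map π := by
          rw [Measure.map_map hψ hφXm, Measure.map_map hπ (hψ.comp hφXm)]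
      _ = μY := by rw [hψμ, Measure.map_map hπ hφYe.measurable, hπφY, Measure.map_id]
  · by_cases hx : x ∈ G
    · rw [piecewise_eq_of_mem _ _ _ hx]
      exact (hπG x hx).symm ▸ (hM x).trans_lt hMr
    · rw [piecewise_eq_of_notMem _ _ _ hx]
      exact hT₀r x

theorem inv_two_mul_gmMM_le_iSup_dist {Z : Type} [MetricSpace Z] [MeasurableSpace Z]
    [BorelSpace Z] {φX : X → Z} {φY : Y → Z} (hφX : Isometry φX) (hφY : Isometry φY)
    {ψ : Z → Z} (hψ : Measurable ψ) (hψμ : (μX.map φX).map ψ = μY.map φY) :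
    2⁻¹ * gmMM μX μY ⊤ ≤
      ⨆ (z : Z) (_ : ∀ U ∈ 𝓝 z, 0 < μX.map φX U), ENNReal.ofReal (dist z (ψ z)) := by
  set S := ⨆ (z : Z) (_ : ∀ U ∈ 𝓝 z, 0 < μX.map φX U), ENNReal.ofReal (dist z (ψ z))
  refine ENNReal.le_of_forall_pos_lt_ofReal fun r _ hSr => ?_
  have hM : ∀ x, dist (φX x) (ψ (φX x)) ≤ S.toReal := fun x =>
    (ENNReal.ofReal_le_iff_le_toReal hSr.ne_top).1 <| le_iSup₂_of_le (φX x)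
      (fun _ hU => pos_map_measure_of_mem_nhds hφX.continuous x hU) le_rfl
  obtain ⟨T, hT, hTr⟩ := exists_measurePreserving_dist_lt hφX hφY hψ hψμ hM
    (ENNReal.toReal_lt_of_lt_ofReal hSr)
  rw [ENNReal.inv_mul_le_iff two_ne_zero ENNReal.ofNat_ne_top]
  calc gmMM μX μY ⊤ ≤ disMapMM μX ⊤ T := iInf₂_le_of_le T hT.measurable (iInf_le _ hT.map_eq)
    _ ≤ ENNReal.ofReal (2 * r) := disMapMM_top_le_of_dist_le μX hφX hφY fun x => (hTr x).le
    _ = 2 * ENNReal.ofReal r := by rw [ENNReal.ofReal_mul zero_le_two, ENNReal.ofReal_ofNat]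

theorem inv_two_mul_gmMM_le_gmEm :
    2⁻¹ * gmMM μX μY ⊤ ≤ gmEm (fun x x' => dist x x') (fun y y' => dist y y') μX μY ⊤ := by
  refine le_iInf fun Z => le_iInf fun _ => le_iInf fun φX => le_iInf fun φY =>
    le_iInf fun hφX => le_iInf fun hφY => ?_
  let := borel Z
  have : BorelSpace Z := ⟨rfl⟩
  refine le_iInf fun ψ => le_iInf fun hψ => le_iInf fun hψμ => ?_
  rw [if_pos rfl]
  exact inv_two_mul_gmMM_le_iSup_dist (.of_dist_eq hφX) (.of_dist_eq hφY) hψ hψμ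

end LowerBound

theorem half_gromovMonge_infty_eq_gmEm_infty_general
    {X Y : Type} [MetricSpace X] [MeasurableSpace X] [BorelSpace X]
    [MetricSpace Y] [PolishSpace Y] [MeasurableSpace Y] [BorelSpace Y]
    (μX : Measure X) [IsProbabilityMeasure μX] [μX.IsOpenPosMeasure]
    (μY : Measure Y) [IsProbabilityMeasure μY] :
    (2 : ℝ≥0∞)⁻¹ * gmMM μX μY ⊤ =
      gmEm (fun x x' => dist x x') (fun y y' => dist y y') μX μY ⊤ := by
  have := nonempty_of_isProbabilityMeasure μX
  have := nonempty_of_isProbabilityMeasure μY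
  exact le_antisymm inv_two_mul_gmMM_le_gmEm gmEm_le_inv_two_mul_gmMM

/-- Theorem `thm:gromov_monge_reformulation`, `p = ∞` case: for all metric
measure spaces `𝒳`, `𝒴`, `(1/2)·GM_∞(𝒳,𝒴) = GM^em_∞(𝒳,𝒴)`. -/
theorem half_gromovMonge_infty_eq_gmEm_infty
    {X Y : Type} [MetricSpace X] [PolishSpace X] [MeasurableSpace X] [BorelSpace X]
    [MetricSpace Y] [PolishSpace Y] [MeasurableSpace Y] [BorelSpace Y]
    (μX : Measure X) [IsProbabilityMeasure μX] [μX.IsOpenPosMeasure]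
    (μY : Measure Y) [IsProbabilityMeasure μY] [μY.IsOpenPosMeasure] :
    (2 : ℝ≥0∞)⁻¹ * gmMM μX μY ⊤ =
      gmEm (fun x x' => dist x x') (fun y y' => dist y y') μX μY ⊤ :=
  half_gromovMonge_infty_eq_gmEm_infty_general μX μY
end
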